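/- arXiv:2501.16558 — 2 statements merged into one kernel-verified Lean document; each statement's English description precedes it below -/
import Mathlib

section
/- Fix m+1 probability distributions P_0, P_1, ..., P_m on a finite set, fix j ∈ {1,...,m} and ε ∈ (0, 1/2). Let {B_i}_{i ≠ j} be disjoint sets with P_i(B_i) ≥ 1 − 2ε for all i ≠ j, and suppose every B_i (i ≠ j) is contained in the relative-entropy typical set A_ε(P_i ∥ P_j) = {ω : |log(P_i(ω)/P_j(ω)) − D_KL(P_i∥P_j)| ≤ ε}. Let B_j be the complement of the union of the B_i. Then P_j(B_j^c) ≥ m(1 − 2ε) · exp(−(max_{i≠j} D_KL(P_i∥P_j) + ε)). -/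
open Finset

/-- lower bound on the `j`-th error probability via change of measure
on relative-entropy typical sets. -/
theorem stmt4
    {m : ℕ} (hm : 1 ≤ m)
    {Ω : Type*} [Fintype Ω] [DecidableEq Ω]
    (P : Fin (m + 1) → Ω → ℝ)
    (hP0 : ∀ i ω, 0 ≤ P i ω) (hP1 : ∀ i, ∑ ω, P i ω = 1)
    (j : Fin (m + 1))
    (ε : ℝ) (hε1 : 0 < ε) (hε2 : ε < 1 / 2)
    -- finiteness of the divergences: P i ≪ P j for i ≠ j
    (hac : ∀ i, i ≠ j → ∀ ω, P j ω = 0 → P i ω = 0)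
    (KL : Fin (m + 1) → ℝ)
    (hKL : ∀ i, KL i = ∑ ω, P i ω * Real.log (P i ω / P j ω))
    (B : Fin (m + 1) → Finset Ω)
    (hdisj : ∀ i i', i ≠ j → i' ≠ j → i ≠ i' → Disjoint (B i) (B i'))
    (hmass : ∀ i, i ≠ j → 1 - 2 * ε ≤ ∑ ω ∈ B i, P i ω)
    -- each B i is contained in the relative-entropy typical set A_ε(P i ∥ P j)
    (htyp : ∀ i, i ≠ j → ∀ ω ∈ B i, |Real.log (P i ω / P j ω) - KL i| ≤ ε)
    (hBj : B j = ((Finset.univ.erase j).biUnion B)ᶜ) :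
    ∀ Dmax : ℝ, (∀ i, i ≠ j → KL i ≤ Dmax) →
      m * (1 - 2 * ε) * Real.exp (-(Dmax + ε)) ≤ ∑ ω ∈ (B j)ᶜ, P j ω := by
  intro Dmax hD
  have hexp : (0:ℝ) < Real.exp (-(Dmax + ε)) := Real.exp_pos _
  have hstep : ∀ i, i ≠ j → (1 - 2 * ε) * Real.exp (-(Dmax + ε)) ≤ ∑ ω ∈ B i, P j ω := by
    intro i hi
    have h1 : ∀ ω ∈ B i, P i ω * Real.exp (-(Dmax + ε)) ≤ P j ω := by
      intro ω hω
      by_cases hz : P i ω = 0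
      · rw [hz, zero_mul]; exact hP0 j ω
      have hpi : 0 < P i ω := lt_of_le_of_ne (hP0 i ω) (Ne.symm hz)
      have hpj : 0 < P j ω := by
        rcases (hP0 j ω).lt_or_eq with h | h
        · exact h
        · exact absurd (hac i hi ω h.symm) hz
      have hlog : Real.log (P i ω / P j ω) ≤ KL i + ε := by
        have := abs_le.mp (htyp i hi ω hω)
        linarith [this.2]
      have hle : P i ω / P j ω ≤ Real.exp (Dmax + ε) := by
        calc P i ω / P j ω = Real.exp (Real.log (P i ω / P j ω)) :=
              (Real.exp_log (div_pos hpi hpj)).symm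
          _ ≤ Real.exp (Dmax + ε) := Real.exp_le_exp.mpr (by linarith [hD i hi])
      have h2 : P i ω ≤ Real.exp (Dmax + ε) * P j ω := (div_le_iff₀ hpj).mp hle
      have key : Real.exp (-(Dmax + ε)) * Real.exp (Dmax + ε) = 1 := by
        rw [← Real.exp_add]; ring_nf; exact Real.exp_zero
      nlinarith [hexp, hpj]
    calc (1 - 2 * ε) * Real.exp (-(Dmax + ε))
        ≤ (∑ ω ∈ B i, P i ω) * Real.exp (-(Dmax + ε)) :=
          mul_le_mul_of_nonneg_right (hmass i hi) hexp.le
      _ = ∑ ω ∈ B i, P i ω * Real.exp (-(Dmax + ε)) := Finset.sum_mul _ _ _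
      _ ≤ ∑ ω ∈ B i, P j ω := Finset.sum_le_sum h1
  have hcompl : (B j)ᶜ = (Finset.univ.erase j).biUnion B := by rw [hBj, compl_compl]
  rw [hcompl, Finset.sum_biUnion (by
    intro i hi i' hi' hne
    exact hdisj i i' (Finset.ne_of_mem_erase hi) (Finset.ne_of_mem_erase hi') hne)]
  have hcard : (Finset.univ.erase j).card = m := by
    rw [Finset.card_erase_of_mem (Finset.mem_univ j), Finset.card_univ, Fintype.card_fin]; omega
  calc (m : ℝ) * (1 - 2 * ε) * Real.exp (-(Dmax + ε))
      = ∑ _i ∈ Finset.univ.erase j, (1 - 2 * ε) * Real.exp (-(Dmax + ε)) := by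
        rw [Finset.sum_const, hcard, nsmul_eq_mul, mul_assoc]
    _ ≤ ∑ i ∈ Finset.univ.erase j, ∑ ω ∈ B i, P j ω :=
        Finset.sum_le_sum fun i hi => hstep i (Finset.ne_of_mem_erase hi)
end

section
/- Fix a finite set X, a distribution P_ζ on a finite set Z, m ≥ 1, and α ∈ (0,1). Suppose a (randomized or deterministic) decoder γ : X × Z → {0,1,...,m} satisfies the worst-case false alarm constraint: for every x ∈ X, Σ_ζ P_ζ(ζ) 1{γ(x,ζ) ≠ 0} ≤ α. For j ∈ {1,...,m} and x ∈ X let α_j(x) := Σ_ζ P_ζ(ζ)1{γ(x,ζ)=j}. Then for every j ∈ {1,...,m}, any joint distribution π_j on X × Z with Z-marginal P_ζ and X-marginal P_X satisfies π_j(γ(X,Z) = j) ≤ Σ_x min(P_X(x), α_j(x)); moreover, if additionally there are constants α_j with α_j(x) ≤ α_j for all x and Σ_j α_j = α, then max_j π_j(γ(X,Z) ≠ j) ≥ Σ_x (P_X(x) − α/m)_+. -/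
open Finset

/-- under the worst-case false alarm constraint, the `j`-th correct
decoding probability is bounded, and the max over `j` of the `j`-th error
probability is at least `Σ_x (P_X(x) − α/m)_+`. -/
theorem stmt13
    {X Z : Type*} [Fintype X] [Fintype Z]
    {m : ℕ} (hm : 1 ≤ m)
    (γ : X → Z → ℕ) (hγ : ∀ x z, γ x z ≤ m)
    (Pζ : Z → ℝ) (hPζ0 : ∀ z, 0 ≤ Pζ z) (hPζ1 : ∑ z, Pζ z = 1)
    (PX : X → ℝ) (hPX0 : ∀ x, 0 ≤ PX x) (hPX1 : ∑ x, PX x = 1)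
    (α : ℝ) (hα0 : 0 < α) (hα1 : α < 1)
    -- worst-case false alarm constraint
    (hFA : ∀ x, ∑ z ∈ Finset.univ.filter (fun z => γ x z ≠ 0), Pζ z ≤ α)
    (π : ℕ → X × Z → ℝ)
    (hπ0 : ∀ j ∈ Finset.Icc 1 m, ∀ p, 0 ≤ π j p)
    (hπX : ∀ j ∈ Finset.Icc 1 m, ∀ x, ∑ z, π j (x, z) = PX x)
    (hπZ : ∀ j ∈ Finset.Icc 1 m, ∀ z, ∑ x, π j (x, z) = Pζ z) :
    (∀ j ∈ Finset.Icc 1 m,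
      ∑ x, ∑ z ∈ Finset.univ.filter (fun z => γ x z = j), π j (x, z)
        ≤ ∑ x, min (PX x) (∑ z ∈ Finset.univ.filter (fun z => γ x z = j), Pζ z)) ∧
    (∀ a : ℕ → ℝ,
      (∀ j ∈ Finset.Icc 1 m, ∀ x,
        ∑ z ∈ Finset.univ.filter (fun z => γ x z = j), Pζ z ≤ a j) →
      (∑ j ∈ Finset.Icc 1 m, a j = α) →
      ∃ j ∈ Finset.Icc 1 m,
        ∑ x, max (PX x - α / m) 0
          ≤ ∑ x, ∑ z ∈ Finset.univ.filter (fun z => γ x z ≠ j), π j (x, z)) := by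

  have key : ∀ j ∈ Finset.Icc 1 m, ∀ x,
      ∑ z ∈ Finset.univ.filter (fun z => γ x z = j), π j (x, z)
        ≤ min (PX x) (∑ z ∈ Finset.univ.filter (fun z => γ x z = j), Pζ z) := by
    intro j hj x
    refine le_min ?_ (Finset.sum_le_sum fun z _ => ?_)
    · calc ∑ z ∈ Finset.univ.filter (fun z => γ x z = j), π j (x, z)
          ≤ ∑ z, π j (x, z) :=
            Finset.sum_le_sum_of_subset_of_nonneg (Finset.filter_subset _ _)
              (fun z _ _ => hπ0 j hj _)
        _ = PX x := hπX j hj x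
    · calc π j (x, z) ≤ ∑ x', π j (x', z) :=
            Finset.single_le_sum (f := fun x' => π j (x', z)) (fun x' _ => hπ0 j hj _) (Finset.mem_univ x)
        _ = Pζ z := hπZ j hj z
  constructor
  · intro j hj
    exact Finset.sum_le_sum fun x _ => key j hj x
  · intro a ha hsum
    have hmpos : (0:ℝ) < m := by exact_mod_cast hm
    obtain ⟨j, hj, hja⟩ : ∃ j ∈ Finset.Icc 1 m, a j ≤ α / m := by
      by_contra h
      push_neg at h
      have hlt : α < ∑ j ∈ Finset.Icc 1 m, a j := by
        have heq : (∑ _j ∈ Finset.Icc 1 m, α / m) = α := by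
          rw [Finset.sum_const, Nat.card_Icc]
          simp only [Nat.add_sub_cancel, nsmul_eq_mul]
          field_simp
        calc α = ∑ _j ∈ Finset.Icc 1 m, α / m := heq.symm
          _ < _ := Finset.sum_lt_sum_of_nonempty ⟨1, by simp [hm]⟩ (fun j hj => h j hj)
      linarith
    refine ⟨j, hj, Finset.sum_le_sum fun x _ => ?_⟩
    have hsplit := Finset.sum_filter_add_sum_filter_not Finset.univ
      (fun z => γ x z = j) (fun z => π j (x, z))
    rw [hπX j hj x] at hsplit
    have h1 := key j hj x
    have h2 := ha j hj x
    have h3 : min (PX x) (∑ z ∈ Finset.univ.filter (fun z => γ x z = j), Pζ z)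
        ≤ min (PX x) (α / m) := min_le_min le_rfl (le_trans h2 hja)
    have : max (PX x - α / m) 0 = PX x - min (PX x) (α / m) := by
      rcases le_total (PX x) (α / m) with h | h
      · rw [min_eq_left h, max_eq_right (by linarith)]; ring
      · rw [min_eq_right h, max_eq_left (by linarith)]
    rw [this]
    linarith
end
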